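/- arXiv:math/0001061 — 7 statements merged into one kernel-verified Lean document; each statement's English description precedes it below -/
import Mathlib

section
/- For integers n ≥ 2, k ≥ 0, l ≥ 0, and 0 ≤ b ≤ a ≤ n, 0 ≤ d ≤ n, the set M of integers c with 0 ≤ c ≤ n satisfying k ≡ n+c+l (mod 2), k ≤ n-c+l, k ≥ |n-c-l|, a+b ≡ c+d (mod 2), a+b ≤ c+d, a-b ≥ |c-d|, and a-b ≤ 2n-c-d is nonempty if and only if k+a+b ≡ n+l+d (mod 2), b ≤ d, |k-l| + |a-d| ≤ n-b, and |n-a+b-d| ≤ k+l. -/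
set_option maxHeartbeats 2000000


/-- The multiplicity set `M_{k,a,b}(l,d)` is nonempty iff the four admissibility
conditions hold. -/
theorem admissible_twist_characterization
    (n k l a b d : ℤ) (hn : 2 ≤ n) (hk : 0 ≤ k) (hl : 0 ≤ l)
    (hb : 0 ≤ b) (hba : b ≤ a) (han : a ≤ n) (hd : 0 ≤ d) (hdn : d ≤ n) :
    (∃ c : ℤ, 0 ≤ c ∧ c ≤ n ∧
        (2 ∣ (k - (n + c + l))) ∧
        k ≤ n - c + l ∧
        |n - c - l| ≤ k ∧
        (2 ∣ (a + b - (c + d))) ∧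
        a + b ≤ c + d ∧
        |c - d| ≤ a - b ∧
        a - b ≤ 2 * n - c - d) ↔
      ((2 ∣ (k + a + b - (n + l + d))) ∧
        b ≤ d ∧
        |k - l| + |a - d| ≤ n - b ∧
        |n - a + b - d| ≤ k + l) := by
  constructor
  · rintro ⟨c, h0, h1, h2, h3, h4, h5, h6, h7, h8⟩
    rw [abs_le] at h4 h7
    rcases abs_cases (k - l) with ⟨e3, _⟩ | ⟨e3, _⟩ <;>
      rcases abs_cases (a - d) with ⟨e4, _⟩ | ⟨e4, _⟩ <;>
      rcases abs_cases (n - a + b - d) with ⟨e5, _⟩ | ⟨e5, _⟩ <;>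
      refine ⟨?_, ?_, ?_, ?_⟩ <;> omega
  · rintro ⟨hp, hbd, h3, h4⟩
    rcases abs_cases (k - l) with ⟨e3, _⟩ | ⟨e3, _⟩ <;>
      rcases abs_cases (a - d) with ⟨e4, _⟩ | ⟨e4, _⟩ <;>
      rcases abs_cases (n - a + b - d) with ⟨e5, _⟩ | ⟨e5, _⟩ <;>
      refine ⟨max (max (n - k - l) (a + b - d)) (max (d - a + b) ((n + k + l) % 2)),
        ?_, ?_, ?_, ?_, abs_le.mpr ⟨?_, ?_⟩, ?_, ?_, abs_le.mpr ⟨?_, ?_⟩, ?_⟩ <;> omega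
end

section
/- Let n ≥ 2, k ≥ 0, 0 ≤ b ≤ a ≤ n with k > 0 or a > b. Among all pairs (l,d) with l ≥ 0, 0 ≤ d ≤ n satisfying the admissibility conditions (k+a+b ≡ n+l+d mod 2, b ≤ d, |k-l|+|a-d| ≤ n-b, |n-a+b-d| ≤ k+l), the function φ(l,d) = (l+d-n)(l-d+n+2) attains its maximum exactly at the unique pair (l,d) = (k+n-b, a). -/
/-- An admissible twist `(l,d)` for the representation `Sym^k H ⊗ Λ^{a,b}_top E`. -/
def Admissible (n k a b l d : ℤ) : Prop :=
  0 ≤ l ∧ 0 ≤ d ∧ d ≤ n ∧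
    (2 ∣ (k + a + b - (n + l + d))) ∧
    b ≤ d ∧
    |k - l| + |a - d| ≤ n - b ∧
    |n - a + b - d| ≤ k + l

/-- The curvature term. -/
def phi (n l d : ℤ) : ℤ := (l + d - n) * (l - d + n + 2)

/-- Classification of maximal twists: for `k > 0` or `a > b` the unique maximal
twist is `R^{k+n-b, a}`. -/
theorem maximal_twist_unique
    (n k a b : ℤ) (hn : 2 ≤ n) (hk : 0 ≤ k)
    (hb : 0 ≤ b) (hba : b ≤ a) (han : a ≤ n) (hkab : 0 < k ∨ b < a) :
    Admissible n k a b (k + n - b) a ∧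
      ∀ l d : ℤ, Admissible n k a b l d →
        phi n l d ≤ phi n (k + n - b) a ∧
          (phi n l d = phi n (k + n - b) a → l = k + n - b ∧ d = a) := by
  constructor
  · refine ⟨by omega, by omega, by omega, ⟨b - n, by ring⟩, by omega, ?_, ?_⟩
    · rcases abs_cases (k - (k + n - b)) with ⟨e1, he1⟩ | ⟨e1, he1⟩ <;>
        rcases abs_cases (a - a) with ⟨e2, he2⟩ | ⟨e2, he2⟩ <;> omega
    · rcases abs_cases (n - a + b - a) with ⟨e, he⟩ | ⟨e, he⟩ <;> omega
  · rintro l d ⟨hl, hd0, hdn, hpar, hbd, habs, -⟩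
    have hu : l + d - n ≤ k + a - b := by
      rcases abs_cases (k - l) with ⟨e1, he1⟩ | ⟨e1, he1⟩ <;>
        rcases abs_cases (a - d) with ⟨e2, he2⟩ | ⟨e2, he2⟩ <;> omega
    have hv : l - d + n + 2 ≤ (k + n - b) - a + n + 2 := by
      rcases abs_cases (k - l) with ⟨e1, he1⟩ | ⟨e1, he1⟩ <;>
        rcases abs_cases (a - d) with ⟨e2, he2⟩ | ⟨e2, he2⟩ <;> omega
    have hvpos : 0 < l - d + n + 2 := by omega
    have hu0 : 0 < k + a - b := by omega
    have hv0 : 0 < (k + n - b) - a + n + 2 := by omega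
    constructor
    · unfold phi
      nlinarith [mul_nonneg (sub_nonneg.mpr hu) hvpos.le,
        mul_nonneg hu0.le (sub_nonneg.mpr hv)]
    · intro heq
      unfold phi at heq
      have h1 : (k + n - b) - a + n + 2 ≤ l - d + n + 2 := by
        nlinarith [mul_nonneg (sub_nonneg.mpr hu) hvpos.le]
      have h2 : l - d + n + 2 = (k + n - b) - a + n + 2 := le_antisymm hv h1
      have h3 : k + a - b ≤ l + d - n := by nlinarith
      omega
end

section
/- Let n ≥ 2, k ≥ 0, 0 ≤ b ≤ a ≤ n with k > (n-a)+(n-b). Among all admissible pairs (l,d) (satisfying k+a+b ≡ n+l+d mod 2, b ≤ d, |k-l|+|a-d| ≤ n-b, |n-a+b-d| ≤ k+l, with l ≥ 0 and 0 ≤ d ≤ n), the function φ(l,d) = (l+d-n)(l-d+n+2) attains its minimum exactly at the unique pair (l,d) = (k-n+b, a). -/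
/-!
Write `φ(l,d) = s·t` with `s = l + d - n` and `t = l - d + n + 2`. The admissibility condition
`|k-l| + |a-d| ≤ n-b` bounds both factors from below, by `s₀ = k+a+b-2n` and `t₀ = k-a+b+2`,
and these are exactly the factors at `(k-n+b, a)`. When `k > (n-a)+(n-b)` both bounds are
positive, so `s·t ≥ s₀·t₀` with equality only if `s = s₀` and `t = t₀`, which pins down `(l,d)`.
-/

theorem admissible_minimal_twist {n k a b : ℤ} (hb : 0 ≤ b) (hba : b ≤ a) (han : a ≤ n)
    (hbig : (n - a) + (n - b) < k) : Admissible n k a b (k - n + b) a := by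
  refine ⟨by linarith, by linarith, han, ⟨0, by ring⟩, hba, ?_, ?_⟩
  · rw [show k - (k - n + b) = n - b by ring, sub_self, abs_zero, add_zero,
      abs_of_nonneg (by linarith)]
  · rw [abs_le]
    constructor <;> linarith

theorem add_le_and_sub_le_of_abs_add_abs_le {x y c : ℤ} (h : |x| + |y| ≤ c) :
    x + y ≤ c ∧ x - y ≤ c :=
  ⟨by linarith [le_abs_self x, le_abs_self y], by linarith [le_abs_self x, neg_abs_le y]⟩

theorem phi_factors_ge_of_admissible {n k a b l d : ℤ} (h : Admissible n k a b l d) :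
    k + a + b - 2 * n ≤ l + d - n ∧ k - a + b + 2 ≤ l - d + n + 2 := by
  obtain ⟨hsum, hdiff⟩ := add_le_and_sub_le_of_abs_add_abs_le h.2.2.2.2.2.1
  constructor <;> linarith

theorem phi_minimal_twist (n k a b : ℤ) :
    phi n (k - n + b) a = (k + a + b - 2 * n) * (k - a + b + 2) := by
  unfold phi
  ring

theorem minimal_twist_first_case_general
    (n k a b : ℤ)
    (hb : 0 ≤ b) (hba : b ≤ a) (han : a ≤ n)
    (hbig : (n - a) + (n - b) < k) :
    Admissible n k a b (k - n + b) a ∧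
      ∀ l d : ℤ, Admissible n k a b l d →
        phi n (k - n + b) a ≤ phi n l d ∧
          (phi n l d = phi n (k - n + b) a → l = k - n + b ∧ d = a) := by
  refine ⟨admissible_minimal_twist hb hba han hbig, fun l d hadm => ?_⟩
  obtain ⟨hs, ht⟩ := phi_factors_ge_of_admissible hadm
  have hs₀ : 0 < k + a + b - 2 * n := by linarith
  have ht₀ : 0 < k - a + b + 2 := by linarith
  rw [phi_minimal_twist]
  unfold phi
  refine ⟨mul_le_mul hs ht ht₀.le (hs₀.trans_le hs).le, fun heq => ?_⟩
  obtain ⟨hs_eq, ht_eq⟩ :=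
    (mul_eq_mul_iff_eq_and_eq_of_pos hs ht hs₀ (ht₀.trans_le ht)).1 heq.symm
  constructor <;> linarith

/-- First case of the classification of minimal twists: for
`k > (n-a) + (n-b)` the unique minimal twist is `R^{k-n+b, a}`. -/
theorem minimal_twist_first_case
    (n k a b : ℤ) (hn : 2 ≤ n) (hk : 0 ≤ k)
    (hb : 0 ≤ b) (hba : b ≤ a) (han : a ≤ n)
    (hbig : (n - a) + (n - b) < k) :
    Admissible n k a b (k - n + b) a ∧
      ∀ l d : ℤ, Admissible n k a b l d →
        phi n (k - n + b) a ≤ phi n l d ∧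
          (phi n l d = phi n (k - n + b) a → l = k - n + b ∧ d = a) :=
  minimal_twist_first_case_general n k a b hb hba han hbig
end

section
/- Let n ≥ 2, k ≥ 0, 0 ≤ b ≤ a ≤ n with k = (n-a)+(n-b). Among all admissible pairs (l,d) (satisfying k+a+b ≡ n+l+d mod 2, b ≤ d, |k-l|+|a-d| ≤ n-b, |n-a+b-d| ≤ k+l, with l ≥ 0, 0 ≤ d ≤ n), the minimum of φ(l,d) = (l+d-n)(l-d+n+2) equals 0, and it is attained exactly at the pairs (l,d) = (n-d, d) for b ≤ d ≤ a. -/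
/-- Second case of the classification of minimal twists: for
`k = (n-a) + (n-b)` the minimum of `φ` over admissible twists is `0`, attained
exactly at the pairs `(n-d, d)` with `b ≤ d ≤ a`. -/
theorem minimal_twist_second_case
    (n k a b : ℤ) (hn : 2 ≤ n) (hk : 0 ≤ k)
    (hb : 0 ≤ b) (hba : b ≤ a) (han : a ≤ n)
    (heq : k = (n - a) + (n - b)) :
    (∀ d : ℤ, b ≤ d → d ≤ a → Admissible n k a b (n - d) d) ∧
      (∀ l d : ℤ, Admissible n k a b l d → 0 ≤ phi n l d) ∧
      ∀ l d : ℤ, Admissible n k a b l d →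
        (phi n l d = 0 ↔ (l = n - d ∧ b ≤ d ∧ d ≤ a)) := by

  subst heq
  refine ⟨?_, ?_, ?_⟩
  · intro d hbd hda
    refine ⟨by omega, by omega, by omega, ⟨0, by ring⟩, hbd, ?_, ?_⟩
    · rw [abs_of_nonneg (by omega : (0:ℤ) ≤ (n - a) + (n - b) - (n - d)),
        abs_of_nonneg (by omega : (0:ℤ) ≤ a - d)]
      omega
    · rcases abs_cases (n - a + b - d) with ⟨h, _⟩ | ⟨h, _⟩ <;> omega
  · rintro l d ⟨hl, hd0, hdn, hpar, hbd, habs, habs2⟩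
    have h1 : n ≤ l + d := by
      rcases abs_cases ((n - a) + (n - b) - l) with ⟨h, _⟩ | ⟨h, _⟩ <;>
        rcases abs_cases (a - d) with ⟨h', _⟩ | ⟨h', _⟩ <;> omega
    exact mul_nonneg (by omega) (by omega)
  · rintro l d ⟨hl, hd0, hdn, hpar, hbd, habs, habs2⟩
    have h1 : n ≤ l + d := by
      rcases abs_cases ((n - a) + (n - b) - l) with ⟨h, _⟩ | ⟨h, _⟩ <;>
        rcases abs_cases (a - d) with ⟨h', _⟩ | ⟨h', _⟩ <;> omega
    constructor
    · intro h0
      have h2 : l + d - n = 0 := by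
        rcases mul_eq_zero.mp h0 with h | h
        · exact h
        · omega
      have hl' : l = n - d := by omega
      refine ⟨hl', hbd, ?_⟩
      subst hl'
      rcases abs_cases ((n - a) + (n - b) - (n - d)) with ⟨h, _⟩ | ⟨h, _⟩ <;>
        rcases abs_cases (a - d) with ⟨h', _⟩ | ⟨h', _⟩ <;> omega
    · rintro ⟨hl', _, _⟩
      subst hl'
      unfold phi
      ring
end

section
/- Let n ≥ 2, k ≥ 0, 0 ≤ b ≤ a ≤ n with k < (n-a)+(n-b) and k+(a-b) > 0. Among all admissible pairs (l,d) (satisfying k+a+b ≡ n+l+d mod 2, b ≤ d, |k-l|+|a-d| ≤ n-b, |n-a+b-d| ≤ k+l, with l ≥ 0, 0 ≤ d ≤ n), the function φ(l,d) = (l+d-n)(l-d+n+2) attains its minimum exactly at the unique pair (l,d) = (|n-a-k|, b); this minimum value is negative. -/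
private lemma quad_key (n b d L l : ℤ) (hL : 0 ≤ L) (hl : 0 ≤ l) (hbd : b ≤ d)
    (hdn : d ≤ n) (hLb : L + b < n) (hsum : L + b ≤ l + d) :
    (L + b - n) * (L - b + n + 2) ≤ (l + d - n) * (l - d + n + 2) ∧
      ((l + d - n) * (l - d + n + 2) = (L + b - n) * (L - b + n + 2) → l = L ∧ d = b) := by
  have hD : (l + d - n) * (l - d + n + 2) - (L + b - n) * (L - b + n + 2)
      = (l - L) * (l + L + 2) + (d - b) * (2 * n + 2 - b - d) := by ring
  rcases le_or_gt L l with h | h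
  · have hA : 0 ≤ (l - L) * (l + L + 2) := mul_nonneg (by linarith) (by linarith)
    have hB : 0 ≤ (d - b) * (2 * n + 2 - b - d) := mul_nonneg (by linarith) (by linarith)
    refine ⟨by linarith, fun heq => ?_⟩
    have hA0 : (l - L) * (l + L + 2) = 0 := by linarith
    have hB0 : (d - b) * (2 * n + 2 - b - d) = 0 := by linarith
    rcases mul_eq_zero.mp hA0 with h1 | h1 <;> rcases mul_eq_zero.mp hB0 with h2 | h2 <;>
      constructor <;> linarith
  · -- l < L : strict inequality
    have h1 : 0 ≤ (d - b) - (L - l) := by linarith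
    have h2 : 0 ≤ 2 * n + 2 - 2 * b - (d - b) - (L - l) := by linarith
    have h3 : 0 < (L - l) := by linarith
    have h4 : 0 < n - b - L := by linarith
    have hstrict : (L + b - n) * (L - b + n + 2) < (l + d - n) * (l - d + n + 2) := by
      nlinarith [mul_nonneg h1 h2, mul_pos h3 h4]
    exact ⟨le_of_lt hstrict, fun heq => absurd heq (by linarith)⟩

/-- Fourth case of the classification of minimal twists: for
`k < (n-a) + (n-b)` and `k + (a-b) > 0` the unique minimal twist is
`R^{|n-a-k|, b}`, and its curvature value is negative. -/
theorem minimal_twist_fourth_case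
    (n k a b : ℤ) (hn : 2 ≤ n) (hk : 0 ≤ k)
    (hb : 0 ≤ b) (hba : b ≤ a) (han : a ≤ n)
    (hlt : k < (n - a) + (n - b)) (hpos : 0 < k + (a - b)) :
    Admissible n k a b (|n - a - k|) b ∧
      phi n (|n - a - k|) b < 0 ∧
      ∀ l d : ℤ, Admissible n k a b l d →
        phi n (|n - a - k|) b ≤ phi n l d ∧
          (phi n l d = phi n (|n - a - k|) b → l = |n - a - k| ∧ d = b) := by
  set L := |n - a - k| with hLdef
  have hLnat : L = ((n - a - k).natAbs : ℤ) := by rw [hLdef, Int.abs_eq_natAbs]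
  have hL0 : 0 ≤ L := abs_nonneg _
  have hLb : L + b < n := by omega
  refine ⟨?_, ?_, ?_⟩
  · unfold Admissible
    simp only [Int.abs_eq_natAbs]
    omega
  · unfold phi
    nlinarith [hL0, hLb, hb]
  · intro l d hadm
    obtain ⟨hl0, hd0, hdn, hpar, hbd, habs1, habs2⟩ := hadm
    have hsum : L + b ≤ l + d := by
      rw [Int.abs_eq_natAbs] at habs2
      have h1 : |k - l| = ((k - l).natAbs : ℤ) := Int.abs_eq_natAbs _
      have h2 : |a - d| = ((a - d).natAbs : ℤ) := Int.abs_eq_natAbs _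
      rw [h1, h2] at habs1
      omega
    have := quad_key n b d L l hL0 hl0 hbd hdn hLb hsum
    unfold phi
    exact this
end

section
/- For n ≥ 2, k ≥ 0, 0 ≤ b ≤ a ≤ n with k < (n-a)+(n-b) and k+(a-b) > 0, the index formula ((-1)^{a+b+d}/2)(n+2 - max{|k-l|, |n-a+b-d|} - max{b+|a-d|, n-k-l}) evaluated at (l,d) = (|n-a-k|, b) equals (-1)^a. -/
/-- The index formula for the admissible twist `R^{l,d}` of `Sym^k H ⊗ Λ^{a,b}_top E`. -/
def indexFormula (n k a b l d : ℤ) : ℚ :=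
  ((-1 : ℚ) ^ (a + b + d).toNat / 2) *
    ((n : ℚ) + 2 - ((max (|k - l|) (|n - a + b - d|) : ℤ) : ℚ)
      - ((max (b + |a - d|) (n - k - l) : ℤ) : ℚ))

/-- The index of the minimal twist `R^{|n-a-k|, b}` in the fourth case of the
classification equals `(-1)^a`. -/
theorem index_of_minimal_twist_fourth_case
    (n k a b : ℤ) (hn : 2 ≤ n) (hk : 0 ≤ k)
    (hb : 0 ≤ b) (hba : b ≤ a) (han : a ≤ n)
    (hlt : k < (n - a) + (n - b)) (hpos : 0 < k + (a - b)) :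
    indexFormula n k a b (|n - a - k|) b = (-1 : ℚ) ^ a.toNat := by
  unfold indexFormula
  have hd : (a + b + b).toNat = a.toNat + 2 * b.toNat := by omega
  have hsign : (-1 : ℚ) ^ (a + b + b).toNat = (-1) ^ a.toNat := by
    rw [hd, pow_add, pow_mul]; norm_num
  rw [hsign]
  have h1 : |n - a + b - b| = n - a := by
    rw [show n - a + b - b = n - a from by ring, abs_of_nonneg (by omega)]
  have h3 : b + |a - b| = a := by rw [abs_of_nonneg (by omega)]; ring
  rcases le_or_gt 0 (n - a - k) with h | h
  · have hl : |n - a - k| = n - a - k := abs_of_nonneg h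
    have h2 : max (abs (k - |n - a - k|)) (|n - a + b - b|) = n - a := by
      rw [hl, h1]
      apply max_eq_right
      rw [abs_le]; constructor <;> omega
    have h4 : max (b + |a - b|) (n - k - |n - a - k|) = a := by
      rw [hl, h3, show n - k - (n - a - k) = a from by ring, max_self]
    rw [h2, h4]
    push_cast
    ring
  · have hl : |n - a - k| = -(n - a - k) := abs_of_neg h
    have h2 : max (abs (k - |n - a - k|)) (|n - a + b - b|) = n - a := by
      rw [hl, h1, show k - (-(n - a - k)) = n - a from by ring,
        abs_of_nonneg (by omega), max_self]
    have h4 : max (b + |a - b|) (n - k - |n - a - k|) = a := by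
      rw [hl, h3]
      apply max_eq_left; omega
    rw [h2, h4]
    push_cast
    ring
end

section
/- Let E be a 2n-dimensional complex symplectic vector space with symplectic form σ, and let Sym^2 E act on E by (e₁e₂)•e = σ(e₁,e)e₂ + σ(e₂,e)e₁, extended as a derivation to Sym^l E. Then the quadratic Casimir element q(R^E) = (1/4)Σ_{μν} (de_μ^♭ de_ν^♭)•(e_μ e_ν)• (summed over a pair of dual bases) acts on Sym^l E as scalar multiplication by -l(n + l/2). -/
open MvPolynomial

/-- Index set for a symplectic basis of `ℂ^{2n}`. -/
abbrev SymplIdx (n : ℕ) := Fin n ⊕ Fin n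

/-- The matrix of the standard symplectic form `σ` on `ℂ^{2n}`:
`σ(e_μ, e_ν) = Jmat n μ ν`. -/
noncomputable def Jmat (n : ℕ) : SymplIdx n → SymplIdx n → ℂ
  | Sum.inl i, Sum.inr j => if i = j then -1 else 0
  | Sum.inr i, Sum.inl j => if i = j then 1 else 0
  | _, _ => 0

/-- The coordinates of the functional `v^♯ = σ(v, ·)` in the dual basis. -/
noncomputable def sharp (n : ℕ) (v : SymplIdx n → ℂ) : SymplIdx n → ℂ :=
  fun ν => ∑ μ, v μ * Jmat n μ ν

/-- Contraction with a linear functional (given by its values `f ν` on the basis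
vectors), acting as a derivation on the symmetric algebra
`Sym E = ℂ[X_ν : ν]`. -/
noncomputable def contractOp (n : ℕ) (f : SymplIdx n → ℂ) :
    MvPolynomial (SymplIdx n) ℂ →ₗ[ℂ] MvPolynomial (SymplIdx n) ℂ :=
  ∑ ν, f ν • (pderiv ν).toLinearMap

/-- Multiplication by the vector `v = Σ v_μ e_μ` on the symmetric algebra. -/
noncomputable def mulOp (n : ℕ) (v : SymplIdx n → ℂ) :
    MvPolynomial (SymplIdx n) ℂ →ₗ[ℂ] MvPolynomial (SymplIdx n) ℂ :=
  LinearMap.mulLeft ℂ (∑ μ, v μ • (X μ : MvPolynomial (SymplIdx n) ℂ))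

/-- The action of `v·w ∈ Sym²E ≅ sp(n)` on the symmetric algebra:
`(vw)• = w·(v^♯⌟) + v·(w^♯⌟)`. -/
noncomputable def actOp (n : ℕ) (v w : SymplIdx n → ℂ) :
    MvPolynomial (SymplIdx n) ℂ →ₗ[ℂ] MvPolynomial (SymplIdx n) ℂ :=
  mulOp n w ∘ₗ contractOp n (sharp n v) + mulOp n v ∘ₗ contractOp n (sharp n w)

/-- The vector `de_μ^♭`, i.e. the vector whose `σ`-pairing with `e_ν` is `δ_{μν}`. -/
noncomputable def flatVec (n : ℕ) (μ : SymplIdx n) : SymplIdx n → ℂ :=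
  fun ρ => Jmat n ρ μ

/-- The quadratic Casimir element
`q(R^E) = (1/4) Σ_{μν} (de_μ^♭ de_ν^♭)•(e_μ e_ν)•` acting on the symmetric
algebra of `E = ℂ^{2n}`. -/
noncomputable def qRE (n : ℕ) :
    MvPolynomial (SymplIdx n) ℂ →ₗ[ℂ] MvPolynomial (SymplIdx n) ℂ :=
  (1 / 4 : ℂ) • ∑ μ, ∑ ν,
    (actOp n (flatVec n μ) (flatVec n ν)) ∘ₗ (actOp n (Pi.single μ 1) (Pi.single ν 1))

/-!
Write `Y ν = de_ν^♭` and `D μ` for contraction with `e_μ^♯`, so that the `(μ, ν)` summand of the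
Casimir operator is `(Y ν ∂_μ + Y μ ∂_ν)(X ν D μ + X μ D ν)`. Expanding with the Leibniz rule,
`Jᵀ = -J` makes `∑ ν, Y ν X ν` vanish and `J² = -1` turns `∑ ν, Y ν D ν` into minus the Euler
operator. Euler's identity, applied to `p` and to the derivatives `D ν p` of degree `l - 1`, then
yields `-2l(2n + l) p`, and the factor `1/4` gives the eigenvalue.
-/

namespace MvPolynomial

variable {σ R : Type*} [CommSemiring R] [Fintype σ]

theorem IsHomogeneous.sum_pderiv_X_mul {k : ℕ} {f : MvPolynomial σ R}
    (hf : f.IsHomogeneous k) :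
    ∑ i, pderiv i (X i * f) = (Fintype.card σ + k) • f := by
  simp only [pderiv_mul, pderiv_X_self, one_mul, Finset.sum_add_distrib, hf.sum_X_mul_pderiv,
    Finset.sum_const, Finset.card_univ, add_smul]

theorem sum_pderiv_X_mul (j : σ) (g : σ → MvPolynomial σ R) :
    ∑ i, pderiv i (X j * g i) = g j + X j * ∑ i, pderiv i (g i) := by
  classical
  simp only [pderiv_mul, pderiv_X, Finset.sum_add_distrib, Finset.mul_sum]
  simp [Pi.single_apply]

theorem sum_sum_symmetrized_pderiv {k : ℕ} (Y q : σ → MvPolynomial σ R)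
    (hq : ∀ j, (q j).IsHomogeneous k) :
    ∑ i, ∑ j, (Y j * pderiv i (X j * q i + X i * q j) + Y i * pderiv j (X j * q i + X i * q j))
      = 2 • ((Fintype.card σ + k + 1) • ∑ j, Y j * q j
          + (∑ j, Y j * X j) * ∑ i, pderiv i (q i)) := by
  have half : ∑ i, ∑ j, Y j * pderiv i (X j * q i + X i * q j)
      = (Fintype.card σ + k + 1) • ∑ j, Y j * q j + (∑ j, Y j * X j) * ∑ i, pderiv i (q i) := by
    rw [Finset.sum_comm]
    simp only [← Finset.mul_sum, map_add, Finset.sum_add_distrib, sum_pderiv_X_mul,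
      (hq _).sum_pderiv_X_mul, Finset.sum_mul, Finset.smul_sum]
    rw [← Finset.sum_add_distrib]
    exact Finset.sum_congr rfl fun j _ => by ring
  have swapped : ∑ i, ∑ j, Y i * pderiv j (X j * q i + X i * q j)
      = ∑ i, ∑ j, Y j * pderiv i (X j * q i + X i * q j) := by
    rw [Finset.sum_comm]
    exact Finset.sum_congr rfl fun i _ => Finset.sum_congr rfl fun j _ => by rw [add_comm (X i * _)]
  rw [two_nsmul, ← half]
  simp only [Finset.sum_add_distrib]
  rw [swapped]

end MvPolynomial

section Symplectic

variable (n : ℕ)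

theorem Jmat_antisymm (μ ν : SymplIdx n) : Jmat n ν μ = -Jmat n μ ν := by
  rcases μ with i | i <;> rcases ν with j | j <;> simp [Jmat, eq_comm, apply_ite (Neg.neg : ℂ → ℂ)]

theorem sum_Jmat_mul_Jmat (μ τ : SymplIdx n) :
    ∑ ν, Jmat n μ ν * Jmat n ν τ = -(Pi.single μ 1 : SymplIdx n → ℂ) τ := by
  rcases μ with i | i <;> rcases τ with j | j <;>
    simp [Jmat, Fintype.sum_sum_type, Pi.single_apply, eq_comm, apply_ite (Neg.neg : ℂ → ℂ)]

theorem sharp_single (μ : SymplIdx n) : sharp n (Pi.single μ 1) = Jmat n μ := by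
  ext ν
  simp [sharp, Pi.single_apply]

theorem sharp_flatVec (μ : SymplIdx n) : sharp n (flatVec n μ) = Pi.single μ 1 := by
  ext ν
  simp only [sharp, flatVec, Jmat_antisymm n μ, neg_mul, Finset.sum_neg_distrib, sum_Jmat_mul_Jmat,
    neg_neg]

theorem contractOp_apply (f : SymplIdx n → ℂ) (p : MvPolynomial (SymplIdx n) ℂ) :
    contractOp n f p = ∑ ν, f ν • pderiv ν p := by
  simp [contractOp]

theorem contractOp_single (μ : SymplIdx n) (p : MvPolynomial (SymplIdx n) ℂ) :
    contractOp n (Pi.single μ 1) p = pderiv μ p := by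
  simp [contractOp_apply, Pi.single_apply]

noncomputable def vecPoly (v : SymplIdx n → ℂ) : MvPolynomial (SymplIdx n) ℂ := ∑ μ, v μ • X μ

theorem vecPoly_single (μ : SymplIdx n) : vecPoly n (Pi.single μ 1) = X μ := by
  simp [vecPoly, Pi.single_apply]

theorem actOp_apply (v w : SymplIdx n → ℂ) (p : MvPolynomial (SymplIdx n) ℂ) :
    actOp n v w p = vecPoly n w * contractOp n (sharp n v) p
      + vecPoly n v * contractOp n (sharp n w) p :=
  rfl

theorem sum_vecPoly_flatVec_mul_X : ∑ ν, vecPoly n (flatVec n ν) * X ν = 0 := by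
  set S := ∑ ν, vecPoly n (flatVec n ν) * X ν
  have hS : S = ∑ ρ, ∑ ν, Jmat n ρ ν • (X ρ * X ν) := by
    simp only [S, vecPoly, flatVec, Finset.sum_mul, smul_mul_assoc]
    exact Finset.sum_comm
  have antisymm : S = -S := by
    conv_lhs => rw [hS, Finset.sum_comm]
    rw [hS, ← Finset.sum_neg_distrib]
    refine Finset.sum_congr rfl fun ρ _ => ?_
    rw [← Finset.sum_neg_distrib]
    refine Finset.sum_congr rfl fun ν _ => ?_
    rw [Jmat_antisymm n ρ ν, neg_smul, mul_comm]
  exact self_eq_neg.mp antisymm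

theorem sum_vecPoly_flatVec_mul_contractOp (p : MvPolynomial (SymplIdx n) ℂ) :
    ∑ ν, vecPoly n (flatVec n ν) * contractOp n (sharp n (Pi.single ν 1)) p
      = -∑ ρ, X ρ * pderiv ρ p := by
  calc ∑ ν, vecPoly n (flatVec n ν) * contractOp n (sharp n (Pi.single ν 1)) p
      = ∑ ρ, ∑ τ, (∑ ν, Jmat n ρ ν * Jmat n ν τ) • (X ρ * pderiv τ p) := by
        simp only [vecPoly, flatVec, contractOp_apply, sharp_single, Finset.sum_mul,
          Finset.mul_sum, smul_mul_smul_comm, Finset.sum_smul]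
        rw [Finset.sum_comm_cycle]
        exact Finset.sum_congr rfl fun ρ _ => Finset.sum_comm
    _ = -∑ ρ, X ρ * pderiv ρ p := by
        simp only [sum_Jmat_mul_Jmat, Pi.single_apply, neg_smul, ite_smul, one_smul, zero_smul,
          Finset.sum_neg_distrib, Finset.sum_ite_eq', Finset.mem_univ, if_true]

end Symplectic

theorem MvPolynomial.IsHomogeneous.contractOp {n l : ℕ} {p : MvPolynomial (SymplIdx n) ℂ}
    (hp : p.IsHomogeneous l) (f : SymplIdx n → ℂ) : (contractOp n f p).IsHomogeneous (l - 1) := by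
  rw [contractOp_apply]
  exact IsHomogeneous.sum _ _ _ fun ν _ => by
    simpa only [smul_eq_C_mul] using hp.pderiv.C_mul (f ν)

theorem casimir_eigenvalue_on_symmetric_power_general
    (n : ℕ) (l : ℕ) (p : MvPolynomial (SymplIdx n) ℂ)
    (hp : p.IsHomogeneous l) :
    qRE n p = (-(l : ℂ) * ((n : ℂ) + (l : ℂ) / 2)) • p := by
  set Y := fun ν => vecPoly n (flatVec n ν)
  set q := fun μ => contractOp n (sharp n (Pi.single μ 1)) p
  have expand : qRE n p = (1 / 4 : ℂ) • ∑ μ, ∑ ν, (Y ν * pderiv μ (X ν * q μ + X μ * q ν)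
      + Y μ * pderiv ν (X ν * q μ + X μ * q ν)) := by
    simp only [qRE, LinearMap.smul_apply, LinearMap.sum_apply, LinearMap.comp_apply, actOp_apply,
      sharp_flatVec, contractOp_single, vecPoly_single, Y, q]
  rw [expand, sum_sum_symmetrized_pderiv Y q fun μ => hp.contractOp _, sum_vecPoly_flatVec_mul_X,
    zero_mul, add_zero, sum_vecPoly_flatVec_mul_contractOp, hp.sum_X_mul_pderiv]
  rcases l with _ | l
  · simp
  · match_scalars
    simp only [Fintype.card_sum, Fintype.card_fin]
    push_cast
    ring

/-- Casimir eigenvalue of `sp(n)` in `σ`-normalization on `Sym^l E`: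
`q(R^E)` acts on `Sym^l E` as multiplication by `-l(n + l/2)`. -/
theorem casimir_eigenvalue_on_symmetric_power
    (n : ℕ) (hn : 2 ≤ n) (l : ℕ) (p : MvPolynomial (SymplIdx n) ℂ)
    (hp : p.IsHomogeneous l) :
    qRE n p = (-(l : ℂ) * ((n : ℂ) + (l : ℂ) / 2)) • p :=
  casimir_eigenvalue_on_symmetric_power_general n l p hp
end
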